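/- arXiv:2207.07545 — 2 statements merged into one kernel-verified Lean document; each statement's English description precedes it below -/
import Mathlib

section
/- Let X be a real Banach space and let P ⊆ X be a nonempty closed convex cone satisfying P ∩ (−P) = {0}; order X by declaring u ≼ v if and only if v − u ∈ P. Let T : X → X be a map that is (i) continuous, (ii) compact in the sense that T maps bounded subsets of X to relatively compact subsets, (iii) order-preserving (u ≼ v implies T(u) ≼ T(v)), and (iv) positively 1-homogeneous (T(s·u) = s·T(u) for every s ≥ 0 and u ∈ X). If there exist a nonzero element u ∈ P and a constant M > 0 such that u ≼ M·T(u), then there exist a real number λ > 0 and a nonzero x ∈ P such that T(x) = λ·x. -/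
/-!
Let `r₀` be the largest `r` admitting a unit vector `p₀ ∈ C` with `r • p₀ ≼ T p₀` inside a
suitable compact set; compactness of `T` makes this maximum exist. The monotone iteration
`z ↦ μ⁻¹ • (T z + p₀)` from `0` solves `μ • z = T z + p₀` for every `μ > r₀`: otherwise the
iterates blow up, and their normalisations converge to such a vector for `μ`, contradicting
maximality. By a Collatz–Wielandt argument the equation has no solution in the cone for `μ = r₀`,
so the solutions blow up as `μ ↓ r₀`, and their normalised limit is an eigenvector for `r₀`.
-/

open Filter Topology Metric Set

section

variable {X : Type*} [NormedAddCommGroup X] [NormedSpace ℝ X] {C : ProperCone ℝ X}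

theorem exists_le_lt_succ_of_unbounded (σ : ℕ → ℝ) (h₀ : σ 0 ≤ 0) (h : ∀ B, ∃ n, B < σ n) :
    ∃ n : ℕ → ℕ, ∀ j : ℕ, σ (n j) ≤ j ∧ (j : ℝ) < σ (n j + 1) := by
  classical
  have hex : ∀ j : ℕ, ∃ k, (j : ℝ) < σ (k + 1) := fun j => by
    obtain ⟨_ | k, hk⟩ := h j
    · exact absurd (h₀.trans (Nat.cast_nonneg j)) hk.not_ge
    · exact ⟨k, hk⟩
  refine ⟨fun j => Nat.find (hex j), fun j => ⟨?_, Nat.find_spec (hex j)⟩⟩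
  show σ (Nat.find (hex j)) ≤ j
  rcases hk : Nat.find (hex j) with _ | k
  · exact h₀.trans (Nat.cast_nonneg j)
  · exact not_lt.mp (Nat.find_min (hex j) (by omega))

namespace ProperCone

theorem eq_zero_of_neg_mem (hC : (C : ConvexCone ℝ X).Salient) {x : X} (hx : x ∈ C)
    (hnx : -x ∈ C) : x = 0 :=
  by_contra fun h => hC x hx h hnx

theorem eq_of_sub_mem_of_sub_mem (hC : (C : ConvexCone ℝ X).Salient) {x y : X} (h₁ : x - y ∈ C)
    (h₂ : y - x ∈ C) : x = y :=
  sub_eq_zero.mp (eq_zero_of_neg_mem hC h₁ (by rwa [neg_sub]))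

theorem sub_mem_of_succ_sub_mem {z : ℕ → X} (hz : ∀ n, z (n + 1) - z n ∈ C) {m n : ℕ}
    (hmn : m ≤ n) : z n - z m ∈ C := by
  induction n, hmn using Nat.le_induction with
  | base => simp
  | succ n _ ih => simpa using C.add_mem (hz n) ih

theorem exists_tendsto_of_succ_sub_mem (hC : (C : ConvexCone ℝ X).Salient) {z : ℕ → X}
    (hz : ∀ n, z (n + 1) - z n ∈ C) {K : Set X} (hK : IsCompact K) (hzK : ∀ n, z n ∈ K) :
    ∃ L, Tendsto z atTop (𝓝 L) := by
  have upper : ∀ L, MapClusterPt L atTop z → ∀ m, L - z m ∈ C := fun L hL m =>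
    (C.isClosed.preimage (continuous_sub_right (z m))).mem_of_mapClusterPt hL
      (eventually_atTop.2 ⟨m, fun n hn => sub_mem_of_succ_sub_mem hz hn⟩)
  have le_of_clusterPt : ∀ L L', MapClusterPt L atTop z → MapClusterPt L' atTop z → L' - L ∈ C :=
    fun L L' hL hL' => (C.isClosed.preimage (continuous_sub_left L')).mem_of_mapClusterPt hL
      (Eventually.of_forall (upper L' hL'))
  obtain ⟨L, -, hL⟩ := hK.exists_mapClusterPt_of_frequently
    (Eventually.of_forall (f := atTop) hzK).frequently
  exact ⟨L, hK.tendsto_nhds_of_unique_mapClusterPt (Eventually.of_forall hzK) fun L' _ hL' =>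
    eq_of_sub_mem_of_sub_mem hC (le_of_clusterPt L L' hL hL') (le_of_clusterPt L' L hL' hL)⟩

theorem eq_zero_of_forall_sub_natCast_smul_mem (hC : (C : ConvexCone ℝ X).Salient) {q z : X}
    (hq : q ∈ C) (h : ∀ k : ℕ, z - (k : ℝ) • q ∈ C) : q = 0 := by
  refine eq_zero_of_neg_mem hC hq (C.isClosed.mem_of_tendsto
    (b := atTop) (f := fun k : ℕ => ((k : ℝ) + 1)⁻¹ • z - q) ?_ (Eventually.of_forall fun k => ?_))
  · simpa using ((tendsto_one_div_add_atTop_nhds_zero_nat (𝕜 := ℝ)).smul_const z).sub_const q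
  · have hk : (0 : ℝ) < k + 1 := by positivity
    have := C.smul_mem (h (k + 1)) (one_div_pos.2 hk).le
    rw [Nat.cast_succ, smul_sub, smul_smul, one_div, inv_mul_cancel₀ hk.ne', one_smul] at this
    exact this

end ProperCone

structure IsMonotoneHomogeneousCompact (C : ProperCone ℝ X) (T : X → X) : Prop where
  continuous : Continuous T
  isCompact_closure_image : ∀ B : Set X, Bornology.IsBounded B → IsCompact (closure (T '' B))
  sub_mem_sub : ∀ u v, v - u ∈ C → T v - T u ∈ C
  map_smul : ∀ s : ℝ, 0 ≤ s → ∀ u, T (s • u) = s • T u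

def IsSubeigenvector (C : ProperCone ℝ X) (T : X → X) (r : ℝ) (q : X) : Prop :=
  q ∈ C ∧ ‖q‖ = 1 ∧ T q - r • q ∈ C

noncomputable def resolventSeq (T : X → X) (μ : ℝ) (w : X) (n : ℕ) : X :=
  (fun z => μ⁻¹ • (T z + w))^[n] 0

section resolventSeq

variable {T : X → X} {μ : ℝ} {w : X}

@[simp] theorem resolventSeq_zero : resolventSeq T μ w 0 = 0 := rfl

theorem resolventSeq_succ (n : ℕ) :
    resolventSeq T μ w (n + 1) = μ⁻¹ • (T (resolventSeq T μ w n) + w) :=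
  Function.iterate_succ_apply' _ n 0

theorem smul_resolventSeq_succ (hμ : μ ≠ 0) (n : ℕ) :
    μ • resolventSeq T μ w (n + 1) = T (resolventSeq T μ w n) + w := by
  rw [resolventSeq_succ, smul_inv_smul₀ hμ]

end resolventSeq

namespace IsMonotoneHomogeneousCompact

variable {T : X → X}

theorem map_zero (hT : IsMonotoneHomogeneousCompact C T) : T 0 = 0 := by
  simpa using hT.map_smul 0 le_rfl 0

theorem smul_smul_eq_map_smul_add (hT : IsMonotoneHomogeneousCompact C T) {μ s : ℝ}
    {a b w : X} (hs : 0 ≤ s) (h : μ • a = T b + w) : μ • s • a = T (s • b) + s • w := by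
  rw [hT.map_smul s hs, smul_comm, h, smul_add]

theorem exists_norm_le (hT : IsMonotoneHomogeneousCompact C T) :
    ∃ c, 0 ≤ c ∧ ∀ x, ‖T x‖ ≤ c * ‖x‖ := by
  obtain ⟨c, hc⟩ := isBounded_iff_forall_norm_le.mp
    (hT.isCompact_closure_image _ (isBounded_closedBall (x := (0 : X)) (r := 1))).isBounded
  refine ⟨max c 0, le_max_right _ _, fun x => ?_⟩
  rcases eq_or_ne x 0 with rfl | hx
  · simp [hT.map_zero]
  have hx' : 0 < ‖x‖ := norm_pos_iff.mpr hx
  have hunit : ‖T (‖x‖⁻¹ • x)‖ ≤ max c 0 := (hc _ (subset_closure (mem_image_of_mem T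
    (mem_closedBall_zero_iff.2 (norm_smul_inv_norm hx).le)))).trans (le_max_left _ _)
  calc ‖T x‖ = ‖x‖ * ‖T (‖x‖⁻¹ • x)‖ := by
        rw [hT.map_smul _ (inv_nonneg.2 hx'.le), norm_smul, norm_inv, norm_norm,
          mul_inv_cancel_left₀ hx'.ne']
    _ ≤ max c 0 * ‖x‖ := by rw [mul_comm]; gcongr

theorem resolventSeq_succ_sub_mem (hT : IsMonotoneHomogeneousCompact C T) {μ : ℝ} (hμ : 0 ≤ μ)
    {w : X} (hw : w ∈ C) (n : ℕ) :
    resolventSeq T μ w (n + 1) - resolventSeq T μ w n ∈ C := by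
  induction n with
  | zero =>
    rw [resolventSeq_succ, resolventSeq_zero, hT.map_zero, zero_add, sub_zero]
    exact C.smul_mem hw (inv_nonneg.2 hμ)
  | succ n ih =>
    rw [resolventSeq_succ (n + 1)]
    nth_rw 2 [resolventSeq_succ n]
    rw [← smul_sub, add_sub_add_right_eq_sub]
    exact C.smul_mem (hT.sub_mem_sub _ _ ih) (inv_nonneg.2 hμ)

theorem resolventSeq_mem (hT : IsMonotoneHomogeneousCompact C T) {μ : ℝ} (hμ : 0 ≤ μ) {w : X}
    (hw : w ∈ C) (n : ℕ) : resolventSeq T μ w n ∈ C := by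
  simpa using C.sub_mem_of_succ_sub_mem (hT.resolventSeq_succ_sub_mem hμ hw) (Nat.zero_le n)

theorem exists_solution_of_bounded (hT : IsMonotoneHomogeneousCompact C T)
    (hC : (C : ConvexCone ℝ X).Salient) {μ B : ℝ} (hμ : 0 < μ) {w : X} (hw : w ∈ C)
    (hB : ∀ n, ‖resolventSeq T μ w n‖ ≤ B) : ∃ z ∈ C, μ • z = T z + w := by
  have hK : IsCompact (insert 0 ((fun y => μ⁻¹ • (y + w)) '' closure (T '' closedBall 0 B))) :=
    ((hT.isCompact_closure_image _ isBounded_closedBall).image (by fun_prop)).insert 0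
  obtain ⟨L, hL⟩ := C.exists_tendsto_of_succ_sub_mem hC (hT.resolventSeq_succ_sub_mem hμ.le hw) hK
    fun n => by
      cases n with
      | zero => exact mem_insert _ _
      | succ n => exact mem_insert_of_mem _ ⟨_, subset_closure (mem_image_of_mem T
          (mem_closedBall_zero_iff.2 (hB n))), (resolventSeq_succ n).symm⟩
  refine ⟨L, C.isClosed.mem_of_tendsto hL (Eventually.of_forall (hT.resolventSeq_mem hμ.le hw)),
    tendsto_nhds_unique ((hL.comp (tendsto_add_atTop_nat 1)).const_smul μ) ?_⟩
  simp only [Function.comp_def, smul_resolventSeq_succ hμ.ne']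
  exact ((hT.continuous.tendsto L).comp hL).add_const w

theorem exists_tendsto_subseq_of_smul_eq (hT : IsMonotoneHomogeneousCompact C T) {μ : ℕ → ℝ}
    {m B : ℝ} (hm : m ≠ 0) (hμ : Tendsto μ atTop (𝓝 m)) {w : ℕ → X} {w₀ : X}
    (hw : Tendsto w atTop (𝓝 w₀)) {x q : ℕ → X} (hxB : ∀ k, ‖x k‖ ≤ B)
    (heq : ∀ k, μ k • q k = T (x k) + w k) :
    ∃ y ∈ closure (T '' closedBall 0 B), ∃ φ : ℕ → ℕ,
      StrictMono φ ∧ Tendsto (q ∘ φ) atTop (𝓝 (m⁻¹ • (y + w₀))) := by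
  obtain ⟨y, hy, φ, hφ, hTφ⟩ := (hT.isCompact_closure_image _ isBounded_closedBall).tendsto_subseq
    fun k => subset_closure (mem_image_of_mem T (mem_closedBall_zero_iff.2 (hxB k)))
  have hμφ := hμ.comp hφ.tendsto_atTop
  refine ⟨y, hy, φ, hφ, ((hμφ.inv₀ hm).smul (hTφ.add (hw.comp hφ.tendsto_atTop))).congr' ?_⟩
  filter_upwards [hμφ.eventually_ne hm] with k hk
  simp only [Function.comp_apply] at hk ⊢
  rw [← heq, inv_smul_smul₀ hk]

theorem exists_subeigenvector_of_unbounded (hT : IsMonotoneHomogeneousCompact C T) {μ : ℝ}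
    (hμ : 0 < μ) {w : X} (hw : w ∈ C) (hunb : ∀ B, ∃ n, B < ‖resolventSeq T μ w n‖) :
    ∃ y ∈ closure (T '' closedBall 0 1), IsSubeigenvector C T μ (μ⁻¹ • y) := by
  set z := resolventSeq T μ w
  obtain ⟨n, hn⟩ := exists_le_lt_succ_of_unbounded (fun k => ‖z k‖) (by simp [z]) hunb
  set s := fun j => ‖z (n j + 1)‖
  have hs₀ : ∀ j, 0 < s j := fun j => (Nat.cast_nonneg j).trans_lt (hn j).2
  have hs : Tendsto (fun j => (s j)⁻¹) atTop (𝓝 0) := tendsto_inv_atTop_zero.comp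
    (tendsto_atTop_mono (fun j => (hn j).2.le) tendsto_natCast_atTop_atTop)
  set q := fun j => (s j)⁻¹ • z (n j + 1)
  -- The crossing indices `n j` keep the rescaled previous iterate in the unit ball.
  have hball : ∀ j, ‖(s j)⁻¹ • z (n j)‖ ≤ 1 := fun j => by
    rw [norm_smul, norm_inv, norm_norm, inv_mul_le_one₀ (hs₀ j)]
    exact (hn j).1.trans (hn j).2.le
  have heq : ∀ j, μ • q j = T ((s j)⁻¹ • z (n j)) + (s j)⁻¹ • w := fun j =>
    hT.smul_smul_eq_map_smul_add (inv_nonneg.2 (hs₀ j).le) (smul_resolventSeq_succ hμ.ne' _)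
  obtain ⟨y, hy, φ, hφ, hq⟩ := hT.exists_tendsto_subseq_of_smul_eq hμ.ne' tendsto_const_nhds
    (by simpa using hs.smul_const w) hball heq
  rw [add_zero] at hq
  refine ⟨y, hy, C.isClosed.mem_of_tendsto hq (Eventually.of_forall fun j =>
    C.smul_mem (hT.resolventSeq_mem hμ.le hw _) (inv_nonneg.2 (hs₀ _).le)), ?_, ?_⟩
  · exact tendsto_nhds_unique hq.norm (tendsto_const_nhds.congr fun j =>
      (norm_smul_inv_norm (norm_pos_iff.1 (hs₀ (φ j)))).symm)
  -- `T q - μ • q + s⁻¹ • w` is the rescaled increment `T (z (n + 1)) - T (z n)`.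
  have hlim := (((hT.continuous.tendsto _).comp hq).sub (hq.const_smul μ)).add
    ((hs.comp hφ.tendsto_atTop).smul_const w)
  rw [zero_smul, add_zero] at hlim
  refine C.isClosed.mem_of_tendsto hlim (Eventually.of_forall fun j => ?_)
  have hs' := inv_nonneg.2 (hs₀ (φ j)).le
  have hinc := C.smul_mem (hT.sub_mem_sub _ _ (hT.resolventSeq_succ_sub_mem hμ.le hw (n (φ j)))) hs'
  simp only [Function.comp_apply, heq, q, hT.map_smul _ hs'] at hinc ⊢
  rw [sub_add_eq_sub_sub, sub_add_cancel, ← smul_sub]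
  exact hinc

theorem exists_solution_or_subeigenvector (hT : IsMonotoneHomogeneousCompact C T)
    (hC : (C : ConvexCone ℝ X).Salient) {μ : ℝ} (hμ : 0 < μ) {w : X} (hw : w ∈ C) :
    (∃ z ∈ C, μ • z = T z + w) ∨
      ∃ y ∈ closure (T '' closedBall 0 1), IsSubeigenvector C T μ (μ⁻¹ • y) := by
  by_cases hB : ∃ B, ∀ n, ‖resolventSeq T μ w n‖ ≤ B
  · obtain ⟨B, hB⟩ := hB
    exact Or.inl (hT.exists_solution_of_bounded hC hμ hw hB)
  · push Not at hB
    exact Or.inr (hT.exists_subeigenvector_of_unbounded hμ hw hB)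

theorem exists_solvable (hT : IsMonotoneHomogeneousCompact C T)
    (hC : (C : ConvexCone ℝ X).Salient) : ∃ μ : ℝ, 0 < μ ∧ ∀ w ∈ C, ∃ z ∈ C, μ • z = T z + w := by
  obtain ⟨c, hc, hTc⟩ := hT.exists_norm_le
  refine ⟨c + 1, by positivity, fun w hw => hT.exists_solution_of_bounded hC (by positivity) hw
    (B := ‖w‖) fun n => ?_⟩
  induction n with
  | zero => simp
  | succ n ih =>
    rw [resolventSeq_succ, norm_smul, norm_inv, Real.norm_of_nonneg (by positivity),
      inv_mul_le_iff₀ (by positivity)]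
    calc ‖T (resolventSeq T (c + 1) w n) + w‖
        ≤ c * ‖resolventSeq T (c + 1) w n‖ + ‖w‖ := (norm_add_le _ _).trans (by gcongr; exact hTc _)
      _ ≤ c * ‖w‖ + ‖w‖ := by gcongr
      _ = (c + 1) * ‖w‖ := by ring

theorem lt_of_isSubeigenvector (hT : IsMonotoneHomogeneousCompact C T)
    (hC : (C : ConvexCone ℝ X).Salient) {r μ : ℝ} {q z : X} (hq : IsSubeigenvector C T r q)
    (hμ : 0 < μ) (hz : z ∈ C) (heq : μ • z = T z + q) : r < μ := by
  by_contra! hrμ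
  -- If `μ ≤ r`, then `z` dominates every `(k / μ) • q`, which a salient cone forbids.
  have step : ∀ t : ℝ, 0 ≤ t → z - t • q ∈ C → z - (t + μ⁻¹) • q ∈ C := by
    intro t ht hzt
    have key : z - (t + μ⁻¹) • q =
        μ⁻¹ • ((T z - T (t • q)) + t • (T q - r • q) + (t * (r - μ)) • q) := by
      rw [hT.map_smul t ht, eq_sub_of_add_eq heq.symm]
      match_scalars <;> field_simp <;> ring
    rw [key]
    exact C.smul_mem (C.add_mem (C.add_mem (hT.sub_mem_sub _ _ hzt) (C.smul_mem hq.2.2 ht))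
      (C.smul_mem hq.1 (mul_nonneg ht (sub_nonneg.2 hrμ)))) (inv_nonneg.2 hμ.le)
  have hray : ∀ k : ℕ, z - (k : ℝ) • μ⁻¹ • q ∈ C := by
    intro k
    induction k with
    | zero => simpa using hz
    | succ k ih =>
      rw [smul_smul] at ih ⊢
      rw [Nat.cast_succ, add_one_mul]
      exact step _ (by positivity) ih
  have := C.eq_zero_of_forall_sub_natCast_smul_mem hC (C.smul_mem hq.1 (inv_nonneg.2 hμ.le)) hray
  rw [smul_eq_zero, inv_eq_zero] at this
  exact this.elim hμ.ne' fun h => by simpa [h] using hq.2.1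

theorem isClosed_setOf_isSubeigenvector (hT : IsMonotoneHomogeneousCompact C T) :
    IsClosed {p : ℝ × X | IsSubeigenvector C T p.1 p.2} :=
  (C.isClosed.preimage continuous_snd).inter ((isClosed_eq (by fun_prop) continuous_const).inter
    (C.isClosed.preimage ((hT.continuous.comp continuous_snd).sub
      (continuous_fst.smul continuous_snd))))

theorem exists_isSubeigenvector_forall_le (hT : IsMonotoneHomogeneousCompact C T)
    (hC : (C : ConvexCone ℝ X).Salient) {K : Set X} (hK : IsCompact K) {r₁ : ℝ} {q₁ : X}
    (hq₁K : q₁ ∈ K) (hq₁ : IsSubeigenvector C T r₁ q₁) :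
    ∃ r₀, r₁ ≤ r₀ ∧ ∃ q₀ ∈ K, IsSubeigenvector C T r₀ q₀ ∧
      ∀ r, ∀ q ∈ K, IsSubeigenvector C T r q → r ≤ r₀ := by
  obtain ⟨μ, hμ, hsolv⟩ := hT.exists_solvable hC
  have hbound : ∀ r q, IsSubeigenvector C T r q → r ≤ μ := fun r q hq => by
    obtain ⟨z, hz, heq⟩ := hsolv q hq.1
    exact (hT.lt_of_isSubeigenvector hC hq hμ hz heq).le
  set A := {p : ℝ × X | r₁ ≤ p.1 ∧ p.2 ∈ K ∧ IsSubeigenvector C T p.1 p.2}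
  have hA : IsCompact A := (isCompact_Icc.prod hK).of_isClosed_subset
    ((isClosed_le continuous_const continuous_fst).inter
      ((hK.isClosed.preimage continuous_snd).inter hT.isClosed_setOf_isSubeigenvector))
    fun p hp => ⟨⟨hp.1, hbound _ _ hp.2.2⟩, hp.2.1⟩
  obtain ⟨⟨r₀, q₀⟩, ⟨hr₀, hq₀K, hq₀⟩, hmax⟩ :=
    hA.exists_isMaxOn ⟨(r₁, q₁), le_rfl, hq₁K, hq₁⟩ continuous_fst.continuousOn
  refine ⟨r₀, hr₀, q₀, hq₀K, hq₀, fun r q hqK hq => ?_⟩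
  rcases le_total r r₁ with h | h
  · exact h.trans hr₀
  · exact hmax (show (r, q) ∈ A from ⟨h, hqK, hq⟩)

theorem exists_solution_of_tendsto (hT : IsMonotoneHomogeneousCompact C T) {μ : ℕ → ℝ}
    {m B : ℝ} (hm : m ≠ 0) (hμ : Tendsto μ atTop (𝓝 m)) {w : ℕ → X} {w₀ : X}
    (hw : Tendsto w atTop (𝓝 w₀)) {z : ℕ → X} (hzB : ∀ k, ‖z k‖ ≤ B) {S : Set X}
    (hS : IsClosed S) (hzS : ∀ k, z k ∈ S) (heq : ∀ k, μ k • z k = T (z k) + w k) :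
    ∃ x ∈ S, m • x = T x + w₀ := by
  obtain ⟨y, -, φ, hφ, hz⟩ := hT.exists_tendsto_subseq_of_smul_eq hm hμ hw hzB heq
  refine ⟨_, hS.mem_of_tendsto hz (Eventually.of_forall fun k => hzS _),
    tendsto_nhds_unique ((hμ.comp hφ.tendsto_atTop).smul hz) ?_⟩
  exact (((hT.continuous.tendsto _).comp hz).add (hw.comp hφ.tendsto_atTop)).congr
    fun k => (heq (φ k)).symm

theorem exists_eigenvector_of_solvable (hT : IsMonotoneHomogeneousCompact C T) {r : ℝ}
    (hr : 0 < r) {w : X} (hsolv : ∀ μ, r < μ → ∃ z ∈ C, μ • z = T z + w)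
    (hr_not : ∀ z ∈ C, r • z ≠ T z + w) : ∃ x ∈ C, ‖x‖ = 1 ∧ T x = r • x := by
  choose z hzC hz using fun k : ℕ => hsolv (r + 1 / (k + 1)) (by simp; positivity)
  have hμ : Tendsto (fun k : ℕ => r + 1 / ((k : ℝ) + 1)) atTop (𝓝 r) := by
    simpa using (tendsto_one_div_add_atTop_nhds_zero_nat (𝕜 := ℝ)).const_add r
  by_cases hbdd : ∃ B, ∃ᶠ k in atTop, ‖z k‖ ≤ B
  · obtain ⟨B, hB⟩ := hbdd
    obtain ⟨φ, hφ, hφB⟩ := extraction_of_frequently_atTop hB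
    obtain ⟨x, hx, hxeq⟩ := hT.exists_solution_of_tendsto hr.ne' (hμ.comp hφ.tendsto_atTop)
      tendsto_const_nhds hφB C.isClosed (fun k => hzC (φ k)) fun k => hz (φ k)
    exact absurd hxeq (hr_not x hx)
  push Not at hbdd
  obtain ⟨φ, hφ, hφz⟩ := extraction_forall_of_eventually fun n : ℕ => hbdd n
  have hz₀ : ∀ k, 0 < ‖z (φ k)‖ := fun k => (Nat.cast_nonneg k).trans_lt (hφz k)
  have hs : Tendsto (fun k => ‖z (φ k)‖⁻¹) atTop (𝓝 0) := tendsto_inv_atTop_zero.comp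
    (tendsto_atTop_mono (fun k => (hφz k).le) tendsto_natCast_atTop_atTop)
  obtain ⟨x, ⟨hxC, hx₁⟩, hxeq⟩ := hT.exists_solution_of_tendsto (S := C ∩ sphere 0 1)
    (z := fun k => ‖z (φ k)‖⁻¹ • z (φ k)) hr.ne' (hμ.comp hφ.tendsto_atTop)
    (by simpa using hs.smul_const w) (fun k => (norm_smul_inv_norm (norm_pos_iff.1 (hz₀ k))).le)
    (C.isClosed.inter isClosed_sphere)
    (fun k => ⟨C.smul_mem (hzC _) (inv_nonneg.2 (hz₀ k).le),
      mem_sphere_zero_iff_norm.2 (norm_smul_inv_norm (norm_pos_iff.1 (hz₀ k)))⟩)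
    fun k => hT.smul_smul_eq_map_smul_add (inv_nonneg.2 (hz₀ k).le) (hz (φ k))
  exact ⟨x, hxC, by simpa using hx₁, by simpa using hxeq.symm⟩

end IsMonotoneHomogeneousCompact

end

theorem stmt0_general (X : Type*) [NormedAddCommGroup X] [NormedSpace ℝ X]
    (P : Set X) (hPclosed : IsClosed P)
    (hPadd : ∀ u ∈ P, ∀ v ∈ P, u + v ∈ P)
    (hPsmul : ∀ s : ℝ, 0 ≤ s → ∀ u ∈ P, s • u ∈ P)
    (hPpointed : ∀ u : X, u ∈ P → -u ∈ P → u = 0)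
    (T : X → X)
    (hTcont : Continuous T)
    (hTcompact : ∀ B : Set X, Bornology.IsBounded B → IsCompact (closure (T '' B)))
    (hTmono : ∀ u v : X, v - u ∈ P → T v - T u ∈ P)
    (hThom : ∀ s : ℝ, 0 ≤ s → ∀ u : X, T (s • u) = s • T u)
    (u : X) (hu : u ∈ P) (hu0 : u ≠ 0)
    (M : ℝ) (hM : 0 < M) (huM : M • T u - u ∈ P) :
    ∃ (lam : ℝ) (x : X), 0 < lam ∧ x ∈ P ∧ x ≠ 0 ∧ T x = lam • x := by
  let C : ProperCone ℝ X :=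
    { carrier := P
      add_mem' := fun hx hy => hPadd _ hx _ hy
      zero_mem' := by simpa using hPsmul 0 le_rfl u hu
      smul_mem' := fun c x hx => hPsmul c c.2 x hx
      isClosed' := hPclosed }
  have hC : (C : ConvexCone ℝ X).Salient := fun x hx hx0 hnx => hx0 (hPpointed x hx hnx)
  have hT : IsMonotoneHomogeneousCompact C T := ⟨hTcont, hTcompact, hTmono, hThom⟩
  set u₁ := ‖u‖⁻¹ • u
  have hu₁ : IsSubeigenvector C T M⁻¹ u₁ := by
    refine ⟨hPsmul _ (by positivity) _ hu, norm_smul_inv_norm hu0, ?_⟩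
    have h : T u₁ - M⁻¹ • u₁ = (‖u‖⁻¹ * M⁻¹) • (M • T u - u) := by
      rw [hThom _ (by positivity)]
      match_scalars <;> field_simp
    rw [h]
    exact hPsmul _ (by positivity) _ huM
  -- The subeigenvectors produced by `exists_solution_or_subeigenvector` lie in `K`.
  set K := insert u₁ ((fun p : ℝ × X => p.1 • p.2) '' (Icc 0 M ×ˢ closure (T '' closedBall 0 1)))
  have hK : IsCompact K :=
    ((isCompact_Icc.prod (hTcompact _ isBounded_closedBall)).image (by fun_prop)).insert u₁
  obtain ⟨r₀, hr₀, p₀, -, hp₀, hmax⟩ :=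
    hT.exists_isSubeigenvector_forall_le hC hK (mem_insert _ _) hu₁
  have hr₀pos : 0 < r₀ := (inv_pos.2 hM).trans_le hr₀
  have hsolv : ∀ μ, r₀ < μ → ∃ z ∈ C, μ • z = T z + p₀ := fun μ hμ =>
    (hT.exists_solution_or_subeigenvector hC (hr₀pos.trans hμ) hp₀.1).resolve_right
      fun ⟨y, hy, hsub⟩ => hμ.not_ge <| hmax μ _ (mem_insert_of_mem _ ⟨(μ⁻¹, y),
        ⟨⟨inv_nonneg.2 (hr₀pos.trans hμ).le, (inv_lt_of_inv_lt₀ hM (hr₀.trans_lt hμ)).le⟩, hy⟩,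
        rfl⟩) hsub
  obtain ⟨x, hxC, hx₁, hTx⟩ := hT.exists_eigenvector_of_solvable hr₀pos hsolv
    fun z hz heq => (hT.lt_of_isSubeigenvector hC hp₀ hr₀pos hz heq).false
  exact ⟨r₀, x, hr₀pos, hxC, norm_ne_zero_iff.1 (by simp [hx₁]), hTx⟩

/-- Nonlinear Krein–Rutman theorem: if `T` is a continuous, compact, order-preserving,
positively 1-homogeneous map on a real Banach space ordered by a closed convex pointed
cone `P`, and `u ≼ M • T u` for some nonzero `u ∈ P` and `M > 0`, then `T` has a
positive eigenvector in `P` with positive eigenvalue. -/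
theorem stmt0 (X : Type*) [NormedAddCommGroup X] [NormedSpace ℝ X] [CompleteSpace X]
    (P : Set X) (hPne : P.Nonempty) (hPclosed : IsClosed P)
    (hPadd : ∀ u ∈ P, ∀ v ∈ P, u + v ∈ P)
    (hPsmul : ∀ s : ℝ, 0 ≤ s → ∀ u ∈ P, s • u ∈ P)
    (hPpointed : ∀ u : X, u ∈ P → -u ∈ P → u = 0)
    (T : X → X)
    (hTcont : Continuous T)
    (hTcompact : ∀ B : Set X, Bornology.IsBounded B → IsCompact (closure (T '' B)))
    (hTmono : ∀ u v : X, v - u ∈ P → T v - T u ∈ P)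
    (hThom : ∀ s : ℝ, 0 ≤ s → ∀ u : X, T (s • u) = s • T u)
    (u : X) (hu : u ∈ P) (hu0 : u ≠ 0)
    (M : ℝ) (hM : 0 < M) (huM : M • T u - u ∈ P) :
    ∃ (lam : ℝ) (x : X), 0 < lam ∧ x ∈ P ∧ x ≠ 0 ∧ T x = lam • x :=
  stmt0_general X P hPclosed hPadd hPsmul hPpointed T hTcont hTcompact hTmono hThom u hu hu0 M hM
    huM
end

section
/- Let d ≥ 1 be an integer and let θ > 0, A > 0, κ > 0, R₀ > 0 and α ∈ (1,2]. Let a : ℝ^d → ℝ^{d×d} be a matrix-valued function with operator norm ‖a(x)‖ ≤ A for all x ∈ ℝ^d, and let v : ℝ^d → ℝ^d satisfy ⟨v(x),x⟩ ≤ −κ|x|^α for all x with |x| ≥ R₀. Define V : ℝ^d → ℝ by V(x) = exp(θ·√(|x|²+1)). Then V is twice continuously differentiable, and there exists R ≥ R₀ such that for every x with |x| ≥ R, trace(a(x)·∇²V(x)) + ⟨v(x), ∇V(x)⟩ ≤ −(θκ/2)·|x|^{α−1}·V(x). -/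
/-! With `φ = √(‖x‖ ^ 2 + 1)` one has `∇V = (θV/φ) x` and
`∇²V = (θV/φ) I + θV (θφ - 1)/φ³ x xᵀ`. Against a diffusion matrix of norm at most `A` both
Hessian terms are `O(θV)` (the rank-one one because `‖x‖² ≤ φ²`), whereas the drift contributes
`(θV/φ) ⟪x, v⟫ ≤ -θκV ‖x‖^α/φ`, which is of order `-θκ ‖x‖^(α-1) V` and dominates for large `‖x‖`
because `α > 1`. -/

open scoped BigOperators

/-- `trace (A ∇²f(x))` where the Hessian is expressed via the second iterated
Fréchet derivative evaluated at coordinate directions. -/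
noncomputable def traceHess {d : ℕ} (A : Matrix (Fin d) (Fin d) ℝ)
    (f : EuclideanSpace ℝ (Fin d) → ℝ) (x : EuclideanSpace ℝ (Fin d)) : ℝ :=
  ∑ i, ∑ j, A i j *
    iteratedFDeriv ℝ 2 f x ![EuclideanSpace.single i 1, EuclideanSpace.single j 1]

noncomputable def lyapV (d : ℕ) (θ : ℝ) (x : EuclideanSpace ℝ (Fin d)) : ℝ :=
  Real.exp (θ * Real.sqrt (‖x‖ ^ 2 + 1))

open Real Filter
open scoped RealInnerProductSpace

section InnerProductSpace

variable {E : Type*} [NormedAddCommGroup E] [InnerProductSpace ℝ E]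

theorem HasDerivAt.hasFDerivAt_comp_sqrt_norm_sq_add_one {g : ℝ → ℝ} {g' : ℝ} {x : E}
    (hg : HasDerivAt g g' √(‖x‖ ^ 2 + 1)) :
    HasFDerivAt (fun y : E => g √(‖y‖ ^ 2 + 1)) ((g' / √(‖x‖ ^ 2 + 1)) • innerSL ℝ x) x := by
  have hsq : HasFDerivAt (fun y : E => ‖y‖ ^ 2 + 1) ((2 : ℕ) • innerSL ℝ x) x :=
    (hasStrictFDerivAt_norm_sq x).hasFDerivAt.add_const 1
  have hφ : √(‖x‖ ^ 2 + 1) ≠ 0 := by positivity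
  refine (hg.comp_hasFDerivAt x
    ((hasDerivAt_sqrt (by positivity)).comp_hasFDerivAt x hsq)).congr_fderiv ?_
  ext y
  simp [smul_smul]
  field_simp

theorem hasFDerivAt_exp_mul_sqrt_norm_sq_add_one (θ : ℝ) (x : E) :
    HasFDerivAt (fun y : E => exp (θ * √(‖y‖ ^ 2 + 1)))
      ((θ * exp (θ * √(‖x‖ ^ 2 + 1)) / √(‖x‖ ^ 2 + 1)) • innerSL ℝ x) x := by
  have h := ((hasDerivAt_id' (√(‖x‖ ^ 2 + 1))).const_mul θ).exp
  rw [mul_one, mul_comm] at h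
  exact h.hasFDerivAt_comp_sqrt_norm_sq_add_one

theorem fderiv_fderiv_exp_mul_sqrt_norm_sq_add_one_apply (θ : ℝ) (x u w : E) :
    fderiv ℝ (fderiv ℝ fun y : E => exp (θ * √(‖y‖ ^ 2 + 1))) x u w
      = θ * exp (θ * √(‖x‖ ^ 2 + 1)) / √(‖x‖ ^ 2 + 1) * ⟪u, w⟫
        + θ * exp (θ * √(‖x‖ ^ 2 + 1)) * (θ * √(‖x‖ ^ 2 + 1) - 1) / √(‖x‖ ^ 2 + 1) ^ 3
          * ⟪x, u⟫ * ⟪x, w⟫ := by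
  set φ := √(‖x‖ ^ 2 + 1)
  have hφ : φ ≠ 0 := by positivity
  have hcoef : HasDerivAt (fun t => θ * exp (θ * t) / t)
      (θ * exp (θ * φ) * (θ * φ - 1) / φ ^ 2) φ := by
    have h := (((hasDerivAt_id' φ).const_mul θ).exp.const_mul θ).div (hasDerivAt_id' φ) hφ
    exact h.congr_deriv (by ring)
  have hgrad : fderiv ℝ (fun y : E => exp (θ * √(‖y‖ ^ 2 + 1)))
      = fun y => (θ * exp (θ * √(‖y‖ ^ 2 + 1)) / √(‖y‖ ^ 2 + 1)) • innerSL ℝ y :=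
    funext fun y => (hasFDerivAt_exp_mul_sqrt_norm_sq_add_one θ y).fderiv
  have hD : HasFDerivAt (fun y : E => (θ * exp (θ * √(‖y‖ ^ 2 + 1)) / √(‖y‖ ^ 2 + 1))
      • innerSL ℝ y) _ x := hcoef.hasFDerivAt_comp_sqrt_norm_sq_add_one.smul
    (innerSL ℝ : E →L[ℝ] E →L[ℝ] ℝ).hasFDerivAt
  rw [hgrad, hD.fderiv]
  simp only [add_apply, smul_apply,
    ContinuousLinearMap.smulRight_apply, innerSL_apply_apply, smul_eq_mul]
  rw [div_div, ← pow_succ]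
  rfl

theorem contDiff_exp_mul_sqrt_norm_sq_add_one (θ : ℝ) {n : WithTop ℕ∞} :
    ContDiff ℝ n fun y : E => exp (θ * √(‖y‖ ^ 2 + 1)) := by
  have hsqrt : ContDiff ℝ n fun y : E => √(‖y‖ ^ 2 + 1) :=
    contDiff_iff_contDiffAt.2 fun y => (contDiffAt_sqrt (by positivity)).comp y
      ((contDiff_norm_sq ℝ).add contDiff_const).contDiffAt
  exact contDiff_exp.comp (contDiff_const.mul hsqrt)

theorem ContinuousLinearMap.abs_inner_apply_self_le (T : E →L[ℝ] E) (x : E) :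
    |⟪x, T x⟫| ≤ ‖T‖ * ‖x‖ ^ 2 :=
  calc |⟪x, T x⟫| ≤ ‖x‖ * ‖T x‖ := abs_real_inner_le_norm _ _
    _ ≤ ‖x‖ * (‖T‖ * ‖x‖) := by gcongr; exact T.le_opNorm x
    _ = ‖T‖ * ‖x‖ ^ 2 := by ring

end InnerProductSpace

namespace Matrix

variable {n : Type*} [Fintype n] [DecidableEq n]

theorem inner_toEuclideanCLM_apply (A : Matrix n n ℝ) (x y : EuclideanSpace ℝ n) :
    ⟪x, toEuclideanCLM (𝕜 := ℝ) A y⟫ = ∑ i, ∑ j, A i j * x i * y j := by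
  simp only [PiLp.inner_apply, ofLp_toEuclideanCLM, mulVec, dotProduct, RCLike.inner_apply,
    ringHom_apply, Finset.sum_mul]
  exact Finset.sum_congr rfl fun i _ => Finset.sum_congr rfl fun j _ => mul_right_comm _ _ _

theorem abs_trace_le_card_mul_norm_toEuclideanCLM (A : Matrix n n ℝ) :
    |A.trace| ≤ Fintype.card n * ‖toEuclideanCLM (𝕜 := ℝ) A‖ := by
  have hdiag (i : n) : |A i i| ≤ ‖toEuclideanCLM (𝕜 := ℝ) A‖ := by
    simpa [inner_toEuclideanCLM_apply] using
      (toEuclideanCLM (𝕜 := ℝ) A).abs_inner_apply_self_le (EuclideanSpace.single i 1)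
  calc |A.trace| ≤ ∑ i, |A i i| := Finset.abs_sum_le_sum_abs _ _
    _ ≤ ∑ _i : n, ‖toEuclideanCLM (𝕜 := ℝ) A‖ := Finset.sum_le_sum fun i _ => hdiag i
    _ = Fintype.card n * ‖toEuclideanCLM (𝕜 := ℝ) A‖ := by simp

end Matrix

theorem traceHess_eq_of_fderiv_fderiv_apply {d : ℕ} {f : EuclideanSpace ℝ (Fin d) → ℝ}
    {x : EuclideanSpace ℝ (Fin d)} {c k : ℝ}
    (hf : ∀ u w, fderiv ℝ (fderiv ℝ f) x u w = c * ⟪u, w⟫ + k * ⟪x, u⟫ * ⟪x, w⟫)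
    (A : Matrix (Fin d) (Fin d) ℝ) :
    traceHess A f x = c * A.trace + k * ⟪x, Matrix.toEuclideanCLM (𝕜 := ℝ) A x⟫ := by
  simp only [traceHess, iteratedFDeriv_two_apply, Matrix.cons_val_zero, Matrix.cons_val_one, hf,
    EuclideanSpace.inner_single_right, PiLp.single_apply, MonoidWithZeroHom.map_ite_one_zero,
    mul_ite, mul_one, mul_zero, ringHom_apply, one_mul, mul_add, Finset.sum_add_distrib,
    Finset.sum_ite_eq', Finset.mem_univ, if_true, Matrix.trace, Matrix.diag_apply, Finset.mul_sum,
    Matrix.inner_toEuclideanCLM_apply]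
  congr 1
  · exact Finset.sum_congr rfl fun i _ => mul_comm _ _
  · exact Finset.sum_congr rfl fun i _ => Finset.sum_congr rfl fun j _ => by ring

/-- `T`, `S`, `I` stand for `trace a`, `⟪x, a x⟫`, `⟪x, v⟫`, `n` for `‖x‖` and `p` for
`‖x‖ ^ (α - 1)`. Since `n / φ ≥ 2/3`, the drift term is at most
`-(2/3) θVκp`, and `hp` lets the `O(θV)` Hessian terms eat only a sixth of it. -/
theorem radial_generator_le {θ V n φ D A κ p T S I : ℝ} (hθ : 0 < θ) (hV : 0 < V) (hn : 1 ≤ n)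
    (hφ0 : 0 ≤ φ) (hφ : φ ^ 2 = n ^ 2 + 1) (hT : |T| ≤ D) (hS : |S| ≤ A * n ^ 2)
    (hI : I ≤ -κ * (p * n)) (hp : 6 * (D + (θ + 1) * A) ≤ κ * p) :
    θ * V / φ * T + θ * V * (θ * φ - 1) / φ ^ 3 * S + θ * V / φ * I ≤ -(θ * κ / 2) * p * V := by
  have hφ1 : 1 ≤ φ := by nlinarith
  have hnφ : n ≤ φ := by nlinarith
  have hφn : 2 * φ ≤ 3 * n := by nlinarith
  have hD : 0 ≤ D := (abs_nonneg T).trans hT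
  have hA : 0 ≤ A := nonneg_of_mul_nonneg_left ((abs_nonneg S).trans hS) (by positivity)
  have hκp : 0 ≤ κ * p := by nlinarith
  have hθV : 0 < θ * V := mul_pos hθ hV
  have htrace : θ * V / φ * T ≤ θ * V * D :=
    calc θ * V / φ * T ≤ θ * V / φ * D := by gcongr; exact (le_abs_self T).trans hT
      _ ≤ θ * V * D := by gcongr; exact div_le_self hθV.le hφ1
  have hhess : θ * V * (θ * φ - 1) / φ ^ 3 * S ≤ θ * V * ((θ + 1) * A) := by
    have hk : (θ * φ - 1) * S ≤ (θ + 1) * A * φ ^ 3 :=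
      calc (θ * φ - 1) * S ≤ |θ * φ - 1| * |S| := (le_abs_self _).trans (abs_mul _ _).le
        _ ≤ ((θ + 1) * φ) * (A * φ ^ 2) := by
          gcongr
          · exact (abs_sub _ _).trans (by rw [abs_one, abs_of_pos (by positivity)]; nlinarith)
          · exact hS.trans (by gcongr)
        _ = (θ + 1) * A * φ ^ 3 := by ring
    calc θ * V * (θ * φ - 1) / φ ^ 3 * S = θ * V / φ ^ 3 * ((θ * φ - 1) * S) := by ring
      _ ≤ θ * V / φ ^ 3 * ((θ + 1) * A * φ ^ 3) := by gcongr
      _ = θ * V * ((θ + 1) * A) := by field_simp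
  have hdrift : θ * V / φ * I ≤ -(2 / 3) * (θ * V * (κ * p)) :=
    calc θ * V / φ * I ≤ θ * V / φ * (-κ * (p * n)) := by gcongr
      _ = -(θ * V * (κ * p)) * (n / φ) := by ring
      _ ≤ -(θ * V * (κ * p)) * (2 / 3) := by
          refine mul_le_mul_of_nonpos_left ?_ (by nlinarith)
          rw [le_div_iff₀ (by positivity)]
          linarith
      _ = -(2 / 3) * (θ * V * (κ * p)) := by ring
  have hbad := mul_le_mul_of_nonneg_left hp hθV.le
  linarith

section Lyapunov

variable {d : ℕ} (θ : ℝ) (x : EuclideanSpace ℝ (Fin d))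

theorem fderiv_lyapV_apply (w : EuclideanSpace ℝ (Fin d)) :
    fderiv ℝ (lyapV d θ) x w
      = θ * lyapV d θ x / √(‖x‖ ^ 2 + 1) * ⟪x, w⟫ := by
  have h : HasFDerivAt (lyapV d θ) _ x := hasFDerivAt_exp_mul_sqrt_norm_sq_add_one θ x
  rw [h.fderiv]
  rfl

theorem traceHess_lyapV (A : Matrix (Fin d) (Fin d) ℝ) :
    traceHess A (lyapV d θ) x
      = θ * lyapV d θ x / √(‖x‖ ^ 2 + 1) * A.trace
        + θ * lyapV d θ x * (θ * √(‖x‖ ^ 2 + 1) - 1) / √(‖x‖ ^ 2 + 1) ^ 3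
          * ⟪x, Matrix.toEuclideanCLM (𝕜 := ℝ) A x⟫ :=
  traceHess_eq_of_fderiv_fderiv_apply (fderiv_fderiv_exp_mul_sqrt_norm_sq_add_one_apply θ x) A

end Lyapunov

theorem stmt7_general (d : ℕ) (θ A κ R₀ α : ℝ)
    (hθ : 0 < θ) (hκ : 0 < κ)
    (hα₁ : 1 < α)
    (a : EuclideanSpace ℝ (Fin d) → Matrix (Fin d) (Fin d) ℝ)
    (ha : ∀ x, ‖Matrix.toEuclideanCLM (𝕜 := ℝ) (a x)‖ ≤ A)
    (v : EuclideanSpace ℝ (Fin d) → EuclideanSpace ℝ (Fin d))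
    (hv : ∀ x : EuclideanSpace ℝ (Fin d), R₀ ≤ ‖x‖ →
      ∑ i, v x i * x i ≤ -κ * ‖x‖ ^ α) :
    ContDiff ℝ 2 (lyapV d θ) ∧
    ∃ R : ℝ, R₀ ≤ R ∧ ∀ x : EuclideanSpace ℝ (Fin d), R ≤ ‖x‖ →
      traceHess (a x) (lyapV d θ) x + fderiv ℝ (lyapV d θ) x (v x)
        ≤ -(θ * κ / 2) * ‖x‖ ^ (α - 1) * lyapV d θ x := by
  refine ⟨contDiff_exp_mul_sqrt_norm_sq_add_one θ, ?_⟩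
  obtain ⟨R, hR⟩ := eventually_atTop.1
    (((tendsto_rpow_atTop (sub_pos.2 hα₁)).eventually_ge_atTop
      (6 * (d * A + (θ + 1) * A) / κ)).and (eventually_ge_atTop 1))
  refine ⟨max R₀ R, le_max_left _ _, fun x hx => ?_⟩
  obtain ⟨hpow, hone⟩ := hR ‖x‖ (le_of_max_le_right hx)
  have hdrift : ⟪x, v x⟫ ≤ -κ * (‖x‖ ^ (α - 1) * ‖x‖) := by
    rw [rpow_sub_one (by positivity), div_mul_cancel₀ _ (by positivity)]
    simpa [PiLp.inner_apply] using hv x (le_of_max_le_left hx)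
  rw [traceHess_lyapV, fderiv_lyapV_apply]
  refine radial_generator_le hθ (exp_pos _) hone (sqrt_nonneg _) (sq_sqrt (by positivity))
    ((a x).abs_trace_le_card_mul_norm_toEuclideanCLM.trans ?_)
    (((Matrix.toEuclideanCLM (𝕜 := ℝ) (a x)).abs_inner_apply_self_le x).trans ?_)
    hdrift ((div_le_iff₀' hκ).1 hpow)
  · rw [Fintype.card_fin]
    gcongr
    exact ha x
  · gcongr
    exact ha x

theorem stmt7 (d : ℕ) (hd : 1 ≤ d) (θ A κ R₀ α : ℝ)
    (hθ : 0 < θ) (hA : 0 < A) (hκ : 0 < κ) (hR₀ : 0 < R₀)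
    (hα₁ : 1 < α) (hα₂ : α ≤ 2)
    (a : EuclideanSpace ℝ (Fin d) → Matrix (Fin d) (Fin d) ℝ)
    (ha : ∀ x, ‖Matrix.toEuclideanCLM (𝕜 := ℝ) (a x)‖ ≤ A)
    (v : EuclideanSpace ℝ (Fin d) → EuclideanSpace ℝ (Fin d))
    (hv : ∀ x : EuclideanSpace ℝ (Fin d), R₀ ≤ ‖x‖ →
      ∑ i, v x i * x i ≤ -κ * ‖x‖ ^ α) :
    ContDiff ℝ 2 (lyapV d θ) ∧
    ∃ R : ℝ, R₀ ≤ R ∧ ∀ x : EuclideanSpace ℝ (Fin d), R ≤ ‖x‖ →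
      traceHess (a x) (lyapV d θ) x + fderiv ℝ (lyapV d θ) x (v x)
        ≤ -(θ * κ / 2) * ‖x‖ ^ (α - 1) * lyapV d θ x :=
  stmt7_general d θ A κ R₀ α hθ hκ hα₁ a ha v hv
end
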